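/- Let f be a Dirac comb of complexity γ on Z_N^d with values of modulus ≤ M, coefficients from a set with pairwise distances ≥ δ > 0 containing 0, and suppose Σ_x |f(x)| ≤ γ Σ_{x∈A_1} |f(x)| for some A_1 ⊂ Z_N^d (1-effective support). If |A_1|·|S| < (N^d/(2γ))·(δ/M), then for every x, |Σ_{m ∈ S} e^{2πi x·m/N} f̂(m)| < δ/2, and hence f is uniquely recoverable from {f̂(m)}_{m∉S} by rounding the partial inverse Fourier sum to the nearest allowed coefficient. -/

import Mathlib

open Finset

noncomputable def ft {N d : ℕ} [NeZero N] (f : (Fin d → ZMod N) → ℂ) (m : Fin d → ZMod N) : ℂ :=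
  ((N : ℂ) ^ d)⁻¹ * ∑ x : Fin d → ZMod N,
    Complex.exp (-(2 * Real.pi * Complex.I * ((∑ i, x i * m i).val : ℂ) / N)) * f x

noncomputable def ch {N d : ℕ} (x m : Fin d → ZMod N) : ℂ :=
  Complex.exp (2 * Real.pi * Complex.I * ((∑ i, x i * m i).val : ℂ) / N)

noncomputable def zz (N : ℕ) : ℂ := Complex.exp (2 * Real.pi * Complex.I / N)

noncomputable def eZ {N : ℕ} (v : ZMod N) : ℂ := zz N ^ v.val

lemma zz_pow_N (N : ℕ) [NeZero N] : zz N ^ N = 1 := by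
  have hN : (N : ℂ) ≠ 0 := Nat.cast_ne_zero.mpr (NeZero.ne N)
  rw [zz, ← Complex.exp_nat_mul]
  rw [show (N : ℂ) * (2 * Real.pi * Complex.I / N) = 2 * Real.pi * Complex.I by
    field_simp]
  exact Complex.exp_two_pi_mul_I

lemma zz_pow_mod {N : ℕ} [NeZero N] (k : ℕ) : zz N ^ (k % N) = zz N ^ k := by
  conv_rhs => rw [← Nat.mod_add_div k N, pow_add, pow_mul, zz_pow_N, one_pow, mul_one]

lemma eZ_eq_exp {N : ℕ} [NeZero N] (v : ZMod N) :
    Complex.exp (2 * Real.pi * Complex.I * (v.val : ℂ) / N) = eZ v := by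
  have hN : (N : ℂ) ≠ 0 := Nat.cast_ne_zero.mpr (NeZero.ne N)
  rw [eZ, zz, ← Complex.exp_nat_mul]
  congr 1
  field_simp

lemma eZ_add {N : ℕ} [NeZero N] (u v : ZMod N) : eZ (u + v) = eZ u * eZ v := by
  rw [eZ, eZ, eZ, ← pow_add, ZMod.val_add, zz_pow_mod]

lemma eZ_ne_zero {N : ℕ} [NeZero N] (v : ZMod N) : eZ v ≠ 0 :=
  pow_ne_zero _ (Complex.exp_ne_zero _)

lemma eZ_zero {N : ℕ} [NeZero N] : eZ (0 : ZMod N) = 1 := by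
  simp [eZ]

lemma eZ_sub {N : ℕ} [NeZero N] (u v : ZMod N) : eZ (u - v) = eZ u * (eZ v)⁻¹ := by
  have h := eZ_add (u - v) v
  rw [sub_add_cancel] at h
  field_simp [eZ_ne_zero v, h]
  exact h.symm

lemma norm_eZ {N : ℕ} [NeZero N] (v : ZMod N) : ‖eZ v‖ = 1 := by
  rw [eZ, norm_pow, zz, Complex.norm_exp]
  rw [show (2 * Real.pi * Complex.I / N) = ((2*Real.pi/N : ℝ) : ℂ) * Complex.I by push_cast; ring]
  simp

lemma eZ_mul_pow {N : ℕ} [NeZero N] (c t : ZMod N) : eZ (c * t) = (eZ c) ^ t.val := by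
  rw [eZ, eZ, ← pow_mul, ZMod.val_mul, zz_pow_mod]

lemma eZ_pow_N {N : ℕ} [NeZero N] (c : ZMod N) : (eZ c) ^ N = 1 := by
  rw [eZ, ← pow_mul, mul_comm, pow_mul, zz_pow_N, one_pow]

lemma sum_eZ {N : ℕ} [NeZero N] (c : ZMod N) :
    ∑ t : ZMod N, eZ (c * t) = if c = 0 then (N : ℂ) else 0 := by
  split_ifs with hc
  · subst hc; simp [eZ_zero]
  · have h1 : eZ c ≠ 1 := by
      intro h
      rw [eZ, zz, ← Complex.exp_nat_mul, Complex.exp_eq_one_iff] at h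
      obtain ⟨n, hn⟩ := h
      have hN : (N : ℂ) ≠ 0 := Nat.cast_ne_zero.mpr (NeZero.ne N)
      have h2 : (2 * Real.pi * Complex.I) ≠ 0 := by
        simp [Real.pi_ne_zero, Complex.I_ne_zero]
      have h4 : (2 * Real.pi * Complex.I / N) ≠ 0 := div_ne_zero h2 hN
      set t := (2 * Real.pi * Complex.I / (N : ℂ)) with ht
      have hNd : (N : ℂ) * (2 * Real.pi * Complex.I / N) = 2 * Real.pi * Complex.I :=
        mul_div_cancel₀ _ hN
      rw [← hNd] at hn
      have h3 : (c.val : ℂ) * t = ((n : ℂ) * N) * t := by linear_combination hn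
      have hval : (c.val : ℂ) = (n : ℂ) * N := mul_right_cancel₀ h4 h3
      have hz : (c.val : ℤ) = n * N := by exact_mod_cast hval
      have hne : c.val ≠ 0 := fun h0 => hc ((ZMod.val_eq_zero c).mp h0)
      have hdvd : (N : ℤ) ∣ (c.val : ℤ) := ⟨n, by linarith⟩
      have hdvdN : N ∣ c.val := Int.ofNat_dvd.mp hdvd
      have := Nat.le_of_dvd (Nat.pos_of_ne_zero hne) hdvdN
      exact absurd (ZMod.val_lt c) (by omega)
    have hstep : ∑ t : ZMod N, eZ (c * t) = ∑ j ∈ Finset.range N, (eZ c) ^ j := by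
      rw [show (fun t : ZMod N => eZ (c * t)) = fun t => (eZ c) ^ (ZMod.val t) from
        funext fun t => eZ_mul_pow c t]
      exact Finset.sum_nbij' (i := ZMod.val) (j := fun j => (j : ZMod N))
        (fun t _ => Finset.mem_range.mpr (ZMod.val_lt t))
        (fun j hj => Finset.mem_univ _)
        (fun t _ => ZMod.natCast_rightInverse t)
        (fun j hj => ZMod.val_cast_of_lt (Finset.mem_range.mp hj))
        (fun t _ => rfl)
    rw [hstep, geom_sum_eq h1, eZ_pow_N, sub_self, zero_div]

lemma eZ_sum {N : ℕ} [NeZero N] {ι : Type*} (s : Finset ι) (g : ι → ZMod N) :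
    eZ (∑ i ∈ s, g i) = ∏ i ∈ s, eZ (g i) := by
  induction s using Finset.cons_induction with
  | empty => simp [eZ_zero]
  | cons a s ha ih => rw [Finset.sum_cons, Finset.prod_cons, eZ_add, ih]

lemma sum_orth {N d : ℕ} [NeZero N] (x y : Fin d → ZMod N) :
    ∑ m : Fin d → ZMod N, eZ (∑ i, (x i - y i) * m i) = if x = y then ((N : ℂ)) ^ d else 0 := by
  have h1 : ∀ m : Fin d → ZMod N, eZ (∑ i, (x i - y i) * m i) = ∏ i, eZ ((x i - y i) * m i) :=
    fun m => eZ_sum _ _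
  simp_rw [h1]
  rw [← Fintype.prod_sum (fun i t => eZ ((x i - y i) * t))]
  by_cases hxy : x = y
  · subst hxy; simp [sum_eZ, eZ_zero]
  · obtain ⟨i, hi⟩ : ∃ i, x i ≠ y i := by
      by_contra h; push_neg at h; exact hxy (funext h)
    rw [if_neg hxy]
    apply Finset.prod_eq_zero (Finset.mem_univ i)
    rw [sum_eZ, if_neg (sub_ne_zero.mpr hi)]

lemma ch_eq {N d : ℕ} [NeZero N] (x m : Fin d → ZMod N) :
    ch x m = eZ (∑ i, x i * m i) := eZ_eq_exp _

lemma norm_ch {N d : ℕ} [NeZero N] (x m : Fin d → ZMod N) : ‖ch x m‖ = 1 := by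
  rw [ch_eq, norm_eZ]

lemma inv_ft {N d : ℕ} [NeZero N] (f : (Fin d → ZMod N) → ℂ) (x : Fin d → ZMod N) :
    ∑ m : Fin d → ZMod N, ch x m * ft f m = f x := by
  have hNd : ((N : ℂ) ^ d) ≠ 0 := pow_ne_zero _ (Nat.cast_ne_zero.mpr (NeZero.ne N))
  have key : ∀ m : Fin d → ZMod N, ch x m * ft f m
      = ((N : ℂ) ^ d)⁻¹ * ∑ y, eZ (∑ i, (x i - y i) * m i) * f y := by
    intro m
    rw [ch_eq, ft, mul_left_comm]
    congr 1
    rw [Finset.mul_sum]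
    refine Finset.sum_congr rfl fun y _ => ?_
    rw [← mul_assoc]
    congr 1
    rw [Complex.exp_neg, eZ_eq_exp, ← eZ_sub, ← Finset.sum_sub_distrib]
    congr 1
    refine Finset.sum_congr rfl fun i _ => ?_
    ring
  simp_rw [key]
  rw [← Finset.mul_sum, Finset.sum_comm]
  simp_rw [← Finset.sum_mul, sum_orth]
  simp_rw [ite_mul, zero_mul]
  rw [Finset.sum_ite_eq Finset.univ x (fun y => ((N:ℂ))^d * f y), if_pos (Finset.mem_univ x)]
  field_simp

theorem stmt13 {N d γ : ℕ} [NeZero N] (hγ : 0 < γ)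
    (δ M : ℝ) (hδ : 0 < δ) (hM : 0 < M)
    (α : Set ℂ) (h0 : (0 : ℂ) ∈ α)
    (hsep : ∀ z ∈ α, ∀ w ∈ α, z ≠ w → δ ≤ ‖z - w‖)
    (hbd : ∀ z ∈ α, ‖z‖ ≤ M)
    (a : Fin γ → ℂ) (A : Fin γ → Finset (Fin d → ZMod N))
    (ha : ∀ i, a i ∈ α)
    (hA : ∀ i j, i ≠ j → Disjoint (A i) (A j))
    (f : (Fin d → ZMod N) → ℂ)
    (hf : ∀ x, f x = ∑ i, if x ∈ A i then a i else 0)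
    (A1 S : Finset (Fin d → ZMod N))
    (heff : ∑ x : Fin d → ZMod N, ‖f x‖ ≤ (γ : ℝ) * ∑ x ∈ A1, ‖f x‖)
    (hrec : ((A1.card : ℝ)) * S.card < (N : ℝ) ^ d / (2 * γ) * (δ / M)) :
    ∀ x : Fin d → ZMod N,
      ‖∑ m ∈ S, ch x m * ft f m‖ < δ / 2 ∧
      (∀ z ∈ α, ‖z - ∑ m ∈ Sᶜ, ch x m * ft f m‖ < δ / 2 → z = f x) := by
  have hfα : ∀ y, f y ∈ α := by
    intro y
    rw [hf y]
    by_cases hy : ∃ i, y ∈ A i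
    · obtain ⟨i, hi⟩ := hy
      rw [Finset.sum_eq_single i]
      · simpa [hi] using ha i
      · intro j _ hj
        rw [if_neg]
        intro hyj
        exact absurd hi (Finset.disjoint_left.mp (hA j i hj) hyj)
      · intro h; exact absurd (Finset.mem_univ i) h
    · push_neg at hy
      rw [Finset.sum_eq_zero fun j _ => by simp [hy j]]
      exact h0
  have hfM : ∀ y, ‖f y‖ ≤ M := fun y => hbd _ (hfα y)
  have hNpos : (0 : ℝ) < (N : ℝ) ^ d :=
    pow_pos (Nat.cast_pos.mpr (Nat.pos_of_ne_zero (NeZero.ne N))) d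
  have hft : ∀ m, ‖ft f m‖ ≤ ((N : ℝ) ^ d)⁻¹ * ∑ y : Fin d → ZMod N, ‖f y‖ := by
    intro m
    rw [ft, norm_mul, norm_inv, norm_pow, Complex.norm_natCast]
    gcongr
    calc ‖∑ y : Fin d → ZMod N,
          Complex.exp (-(2 * Real.pi * Complex.I * (((∑ i, y i * m i).val : ℕ) : ℂ) / N)) * f y‖
        ≤ ∑ y : Fin d → ZMod N,
          ‖Complex.exp (-(2 * Real.pi * Complex.I * (((∑ i, y i * m i).val : ℕ) : ℂ) / N)) * f y‖ :=
          norm_sum_le _ _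
      _ ≤ ∑ y : Fin d → ZMod N, ‖f y‖ := by
          refine Finset.sum_le_sum fun y _ => ?_
          rw [norm_mul, Complex.exp_neg, eZ_eq_exp, norm_inv, norm_eZ, inv_one, one_mul]
  have hsumA1 : ∑ y ∈ A1, ‖f y‖ ≤ (A1.card : ℝ) * M := by
    have := Finset.sum_le_card_nsmul A1 (fun y => ‖f y‖) M (fun y _ => hfM y)
    simpa [nsmul_eq_mul] using this
  have htotal : ∑ y : Fin d → ZMod N, ‖f y‖ ≤ (γ : ℝ) * ((A1.card : ℝ) * M) :=
    heff.trans (mul_le_mul_of_nonneg_left hsumA1 (Nat.cast_nonneg γ))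
  intro x
  have hS : ‖∑ m ∈ S, ch x m * ft f m‖ < δ / 2 := by
    calc ‖∑ m ∈ S, ch x m * ft f m‖ ≤ ∑ m ∈ S, ‖ch x m * ft f m‖ := norm_sum_le _ _
      _ ≤ ∑ m ∈ S, ((N : ℝ) ^ d)⁻¹ * ((γ : ℝ) * ((A1.card : ℝ) * M)) := by
          refine Finset.sum_le_sum fun m _ => ?_
          rw [norm_mul, norm_ch, one_mul]
          exact (hft m).trans (by gcongr)
      _ = (S.card : ℝ) * (((N : ℝ) ^ d)⁻¹ * ((γ : ℝ) * ((A1.card : ℝ) * M))) := by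
          rw [Finset.sum_const, nsmul_eq_mul]
      _ < δ / 2 := by
          have hγ' : (0 : ℝ) < γ := Nat.cast_pos.mpr hγ
          have h1 : (0 : ℝ) < (γ : ℝ) * M / ((N : ℝ) ^ d) := by positivity
          have h2 := mul_lt_mul_of_pos_right hrec h1
          have h3 : (N : ℝ) ^ d / (2 * γ) * (δ / M) * ((γ : ℝ) * M / ((N : ℝ) ^ d)) = δ / 2 := by
            field_simp
          calc (S.card : ℝ) * (((N : ℝ) ^ d)⁻¹ * ((γ : ℝ) * ((A1.card : ℝ) * M)))
              = (A1.card : ℝ) * S.card * ((γ : ℝ) * M / ((N : ℝ) ^ d)) := by ring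
            _ < (N : ℝ) ^ d / (2 * γ) * (δ / M) * ((γ : ℝ) * M / ((N : ℝ) ^ d)) := h2
            _ = δ / 2 := h3
  refine ⟨hS, fun z hz hznear => ?_⟩
  by_contra hne
  have hinv : ∑ m ∈ Sᶜ, ch x m * ft f m = f x - ∑ m ∈ S, ch x m * ft f m := by
    have h := inv_ft f x
    rw [← Finset.sum_add_sum_compl S (fun m => ch x m * ft f m)] at h
    linear_combination h
  have hdist : δ ≤ ‖z - f x‖ := hsep z hz (f x) (hfα x) hne
  have hle : ‖z - f x‖ ≤ ‖z - ∑ m ∈ Sᶜ, ch x m * ft f m‖ + ‖∑ m ∈ S, ch x m * ft f m‖ := by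
    have he : z - f x = (z - ∑ m ∈ Sᶜ, ch x m * ft f m) - ∑ m ∈ S, ch x m * ft f m := by
      rw [hinv]; ring
    rw [he]
    exact norm_sub_le _ _
  linarith
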